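/- arXiv:0907.2032 — 4 statements merged into one kernel-verified Lean document; each statement's English description precedes it below -/
import Mathlib

section
/- (Strong convergence along convergent sequences.) If (x_n)_{n≥1} is a sequence in ℝ^d with x_n → x as n → ∞, then f_n(x_n) → f(x) as n → ∞ (for n ≥ K so that f_n is defined). -/
/-!
Since `f` is continuous and `ℚ^d` is dense, the infimum defining `f_n(x)` may be taken over all
of `ℝ^d`; taking `y = x` gives `f_n(x) ≤ f(x)`, which handles the upper bound. For the lower
bound, points `y` close to `x₀` satisfy `f(y) > f(x₀) - ε` by continuity, while for far points
the linear growth of `f` is beaten by the penalty `n‖x - y‖` once `n` is large.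
-/

/-- The point of `ℝ^d` with rational coordinates `q`. -/
noncomputable def ratPt {d : ℕ} (q : Fin d → ℚ) : EuclideanSpace ℝ (Fin d) :=
  WithLp.toLp 2 (fun i => (q i : ℝ))

/-- The Lipschitz approximation `f_n(x) = inf_{y ∈ ℚ^d} (f(y) + n‖x - y‖)`. -/
noncomputable def lipApprox {d : ℕ} (f : EuclideanSpace ℝ (Fin d) → ℝ) (n : ℝ)
    (x : EuclideanSpace ℝ (Fin d)) : ℝ :=
  ⨅ q : Fin d → ℚ, (f (ratPt q) + n * ‖x - ratPt q‖)

open Filter Topology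

section LowerLinearGrowth

variable {E : Type*} [SeminormedAddCommGroup E] {f : E → ℝ} {K : ℝ}

theorem neg_growth_add_sub_mul_norm_le (hK : 0 ≤ K) (hf : ∀ y, -(K * (1 + ‖y‖)) ≤ f y)
    (n : ℝ) (x y : E) :
    -(K * (1 + ‖x‖)) + (n - K) * ‖x - y‖ ≤ f y + n * ‖x - y‖ := by
  nlinarith [hf y, norm_le_norm_add_norm_sub x y]

theorem eventually_forall_lt_add_mul_norm (hK : 0 ≤ K) (hf : ∀ y, -(K * (1 + ‖y‖)) ≤ f y)
    {x₀ : E} (hcont : ContinuousAt f x₀) {a : ℝ} (ha : a < f x₀) :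
    ∀ᶠ p : ℝ × E in atTop ×ˢ 𝓝 x₀, ∀ y, a < f y + p.1 * ‖p.2 - y‖ := by
  obtain ⟨δ, hδ, hnear⟩ := Metric.continuousAt_iff.mp hcont (f x₀ - a) (sub_pos.mpr ha)
  have hpenalty : Tendsto (fun n : ℝ => (n - K) * (δ / 2)) atTop atTop :=
    (tendsto_atTop_add_const_right atTop (-K) tendsto_id).atTop_mul_const (half_pos hδ)
  have hn := (eventually_ge_atTop K).and
    (hpenalty.eventually_ge_atTop (f x₀ + K * (2 + ‖x₀‖)))
  have hx := Metric.ball_mem_nhds x₀ (lt_min (half_pos hδ) one_pos)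
  filter_upwards [hn.prod_mk hx] with ⟨n, x⟩ ⟨⟨hKn, hlarge⟩, hxx₀⟩ y
  dsimp only at hKn hlarge hxx₀ ⊢
  obtain ⟨hxδ, hx1⟩ := lt_min_iff.mp (dist_eq_norm x x₀ ▸ hxx₀)
  rcases lt_or_ge ‖x - y‖ (δ / 2) with hxy | hxy
  · have hyx₀ : dist y x₀ < δ := by
      rw [dist_comm, dist_eq_norm]
      linarith [norm_sub_le_norm_sub_add_norm_sub x₀ x y, norm_sub_rev x₀ x]
    have hfy := (abs_sub_lt_iff.mp (Real.dist_eq _ _ ▸ hnear hyx₀)).2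
    nlinarith [norm_nonneg (x - y)]
  · have hx : ‖x‖ ≤ ‖x₀‖ + 1 := by linarith [norm_le_norm_add_norm_sub' x x₀]
    have hfar := neg_growth_add_sub_mul_norm_le hK hf n x y
    nlinarith [mul_le_mul_of_nonneg_left hxy (sub_nonneg.mpr hKn)]

end LowerLinearGrowth

theorem denseRange_ratPt (d : ℕ) : DenseRange (ratPt (d := d)) :=
  (WithLp.toLp_surjective 2).denseRange.comp (DenseRange.piMap fun _ => Rat.denseRange_cast)
    (PiLp.continuous_toLp 2 _)

section LipApprox

variable {d : ℕ} {f : EuclideanSpace ℝ (Fin d) → ℝ} {n : ℝ} {x : EuclideanSpace ℝ (Fin d)}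

theorem bddBelow_range_lipApprox {K : ℝ} (hK : 0 ≤ K) (hf : ∀ y, -(K * (1 + ‖y‖)) ≤ f y)
    (hKn : K ≤ n) : BddBelow (Set.range fun q => f (ratPt q) + n * ‖x - ratPt q‖) := by
  refine ⟨-(K * (1 + ‖x‖)), Set.forall_mem_range.mpr fun q => ?_⟩
  nlinarith [neg_growth_add_sub_mul_norm_le hK hf n x (ratPt q), norm_nonneg (x - ratPt q)]

theorem lipApprox_le (hf : Continuous f)
    (hbdd : BddBelow (Set.range fun q => f (ratPt q) + n * ‖x - ratPt q‖))
    (y : EuclideanSpace ℝ (Fin d)) : lipApprox f n x ≤ f y + n * ‖x - y‖ :=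
  (denseRange_ratPt d).induction_on y
    (isClosed_le continuous_const (by fun_prop)) (ciInf_le hbdd)

theorem lipApprox_le_self (hf : Continuous f)
    (hbdd : BddBelow (Set.range fun q => f (ratPt q) + n * ‖x - ratPt q‖)) :
    lipApprox f n x ≤ f x := by
  simpa using lipApprox_le hf hbdd x

theorem le_lipApprox {a : ℝ} (h : ∀ y, a ≤ f y + n * ‖x - y‖) : a ≤ lipApprox f n x :=
  le_ciInf fun q => h (ratPt q)

theorem eventually_lt_lipApprox {K : ℝ} (hK : 0 ≤ K) (hf : ∀ y, -(K * (1 + ‖y‖)) ≤ f y)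
    {x₀ : EuclideanSpace ℝ (Fin d)} (hcont : ContinuousAt f x₀) {a : ℝ} (ha : a < f x₀) :
    ∀ᶠ p : ℝ × EuclideanSpace ℝ (Fin d) in atTop ×ˢ 𝓝 x₀, a < lipApprox f p.1 p.2 := by
  obtain ⟨b, hab, hb⟩ := exists_between ha
  filter_upwards [eventually_forall_lt_add_mul_norm hK hf hcont hb] with p hp
  exact hab.trans_le (le_lipApprox fun y => (hp y).le)

end LipApprox

theorem lipApprox_strong_convergence_general
    (d : ℕ) (f : EuclideanSpace ℝ (Fin d) → ℝ) (hf : Continuous f)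
    (K : ℝ) (hK : 0 ≤ K) (hgrowth : ∀ x, |f x| ≤ K * (1 + ‖x‖))
    (x : ℕ → EuclideanSpace ℝ (Fin d)) (x₀ : EuclideanSpace ℝ (Fin d))
    (hx : Filter.Tendsto x Filter.atTop (nhds x₀)) :
    Filter.Tendsto (fun n : ℕ => lipApprox f (n : ℝ) (x n)) Filter.atTop
      (nhds (f x₀)) := by
  have hlower : ∀ y, -(K * (1 + ‖y‖)) ≤ f y := fun y => neg_le_of_abs_le (hgrowth y)
  have hn : Tendsto (fun n : ℕ => (n : ℝ)) atTop atTop := tendsto_natCast_atTop_atTop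
  refine tendsto_order.2 ⟨fun a ha => ?_, fun b hb => ?_⟩
  · exact (hn.prodMk hx).eventually (eventually_lt_lipApprox hK hlower hf.continuousAt ha)
  · filter_upwards [hn.eventually_ge_atTop K, ((hf.tendsto x₀).comp hx).eventually_lt_const hb]
      with n hKn hfx
    exact (lipApprox_le_self hf (bddBelow_range_lipApprox hK hlower hKn)).trans_lt hfx

/-- strong convergence along convergent sequences: if `x_n → x`,
then `f_n(x_n) → f(x)` as `n → ∞`. -/
theorem lipApprox_strong_convergence
    (d : ℕ) (hd : 1 ≤ d) (f : EuclideanSpace ℝ (Fin d) → ℝ) (hf : Continuous f)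
    (K : ℝ) (hK : 0 ≤ K) (hgrowth : ∀ x, |f x| ≤ K * (1 + ‖x‖))
    (x : ℕ → EuclideanSpace ℝ (Fin d)) (x₀ : EuclideanSpace ℝ (Fin d))
    (hx : Filter.Tendsto x Filter.atTop (nhds x₀)) :
    Filter.Tendsto (fun n : ℕ => lipApprox f (n : ℝ) (x n)) Filter.atTop
      (nhds (f x₀)) :=
  lipApprox_strong_convergence_general d f hf K hK hgrowth x x₀ hx
end

section
/- (Multiplication by a Lipschitz cutoff preserves one-sided monotonicity, with a positive constant.) For all y, y' ∈ ℝ, one has (y − y')·(θ(y)F(y) − θ(y')F(y')) ≤ L·C·|y − y'|². -/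
/-!
Split `θ y F y - θ y' F y' = θ y (F y - F y') + (θ y - θ y') F y'`. Against `y - y'` the first
term is nonpositive by monotonicity of `F` and `θ ≥ 0`, and the second is at most
`L C |y - y'|²` as soon as `|F y'| ≤ C`, i.e. as soon as `y'` lies in the bounded region. The
expression is symmetric in `(y, y')`, so only the case where both points leave the region
remains, and there the cutoff kills both terms.
-/

section CutoffOneSided

variable {θ F : ℝ → ℝ} {L C : ℝ}

theorem sub_mul_sub_mul_le_of_lipschitz {y y' c : ℝ}
    (hθLip : |θ y - θ y'| ≤ L * |y - y'|) (hc : |c| ≤ C) :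
    (y - y') * (θ y - θ y') * c ≤ L * C * |y - y'| ^ 2 :=
  calc (y - y') * (θ y - θ y') * c
      ≤ |(y - y') * (θ y - θ y') * c| := le_abs_self _
    _ = |y - y'| * |θ y - θ y'| * |c| := by rw [abs_mul, abs_mul]
    _ ≤ |y - y'| * (L * |y - y'|) * C := by
        gcongr
        exact mul_nonneg (abs_nonneg _) ((abs_nonneg _).trans hθLip)
    _ = L * C * |y - y'| ^ 2 := by ring

theorem mul_cutoff_sub_le_of_abs_le {y y' : ℝ} (hθ : 0 ≤ θ y)
    (hθLip : |θ y - θ y'| ≤ L * |y - y'|) (hF : (y - y') * (F y - F y') ≤ 0)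
    (hFy' : |F y'| ≤ C) :
    (y - y') * (θ y * F y - θ y' * F y') ≤ L * C * |y - y'| ^ 2 := by
  have hmono : θ y * ((y - y') * (F y - F y')) ≤ 0 := mul_nonpos_of_nonneg_of_nonpos hθ hF
  have hcross := sub_mul_sub_mul_le_of_lipschitz hθLip hFy'
  linear_combination hmono + hcross

end CutoffOneSided

theorem cutoff_one_sided_lipschitz_general
    (r L C : ℝ) (hL : 0 ≤ L) (hC : 0 ≤ C)
    (θ F : ℝ → ℝ)
    (hθ0 : ∀ y, 0 ≤ θ y)
    (hθLip : ∀ y y', |θ y - θ y'| ≤ L * |y - y'|)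
    (hθsupp : ∀ y, r + 1 ≤ |y| → θ y = 0)
    (hFmono : ∀ y y', (y - y') * (F y - F y') ≤ 0)
    (hFbdd : ∀ y, |y| ≤ r + 1 → |F y| ≤ C) :
    ∀ y y', (y - y') * (θ y * F y - θ y' * F y') ≤ L * C * |y - y'| ^ 2 := by
  intro y y'
  by_cases hy' : |y'| ≤ r + 1
  · exact mul_cutoff_sub_le_of_abs_le (hθ0 y) (hθLip y y') (hFmono y y') (hFbdd y' hy')
  by_cases hy : |y| ≤ r + 1
  · have h := mul_cutoff_sub_le_of_abs_le (hθ0 y') (hθLip y' y) (hFmono y' y) (hFbdd y hy)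
    rw [abs_sub_comm] at h
    linear_combination h
  rw [hθsupp y (le_of_not_ge hy), hθsupp y' (le_of_not_ge hy')]
  simp only [zero_mul, sub_self, mul_zero]
  exact mul_nonneg (mul_nonneg hL hC) (sq_nonneg _)

/-- multiplication by a Lipschitz cutoff preserves one-sided
monotonicity, with a positive constant: under the stated assumptions on the
cutoff `θ` and the monotone generator `F`,
`(y − y')·(θ(y)F(y) − θ(y')F(y')) ≤ L·C·|y − y'|²`. -/
theorem cutoff_one_sided_lipschitz
    (r L C : ℝ) (hr : 0 ≤ r) (hL : 0 ≤ L) (hC : 0 ≤ C)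
    (θ F : ℝ → ℝ)
    (hθ0 : ∀ y, 0 ≤ θ y) (hθ1 : ∀ y, θ y ≤ 1)
    (hθLip : ∀ y y', |θ y - θ y'| ≤ L * |y - y'|)
    (hθsupp : ∀ y, r + 1 ≤ |y| → θ y = 0)
    (hFmono : ∀ y y', (y - y') * (F y - F y') ≤ 0)
    (hFbdd : ∀ y, |y| ≤ r + 1 → |F y| ≤ C) :
    ∀ y y', (y - y') * (θ y * F y - θ y' * F y') ≤ L * C * |y - y'| ^ 2 :=
  cutoff_one_sided_lipschitz_general r L C hL hC θ F hθ0 hθLip hθsupp hFmono hFbdd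
end

section
/- (One-sided linear growth of the truncated generator.) For every y ∈ ℝ and z ∈ ℝ^d, y·h(y,z) ≤ |y|·|f(0,0)| + λ·|y|·‖z‖, where h(y,z) := θ(y)·(f(y, q_n(z)) − f(0,0))·c + f(0,0). -/
/-!
Write `q = q_n(z)`; since `q` is `z` scaled by a factor in `[0,1]`, `‖q‖ ≤ ‖z‖`. Splitting
`f(y,q) − f(0,0) = (f(y,q) − f(0,q)) + (f(0,q) − f(0,0))`, monotonicity makes
`y·(f(y,q) − f(0,q)) ≤ 0` and the Lipschitz bound gives `y·(f(0,q) − f(0,0)) ≤ λ·|y|·‖q‖`.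
Multiplying by `θ(y)·c ∈ [0,1]` preserves an upper bound that is nonnegative, and the
remaining term `y·f(0,0)` is at most `|y|·|f(0,0)|`.
-/

/-- The truncation `q_n(z) = z · n/(‖z‖ ∨ n)`. -/
noncomputable def trunc {d : ℕ} (n : ℕ) (z : EuclideanSpace ℝ (Fin d)) :
    EuclideanSpace ℝ (Fin d) :=
  ((n : ℝ) / max ‖z‖ (n : ℝ)) • z

open Set

lemma norm_trunc_le {d : ℕ} (n : ℕ) (z : EuclideanSpace ℝ (Fin d)) : ‖trunc n z‖ ≤ ‖z‖ := by
  have hmax : (n : ℝ) ≤ max ‖z‖ n := le_max_right _ _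
  have hmax0 : 0 ≤ max ‖z‖ (n : ℝ) := (Nat.cast_nonneg n).trans hmax
  rw [trunc, norm_smul, Real.norm_of_nonneg (div_nonneg (Nat.cast_nonneg n) hmax0)]
  exact mul_le_of_le_one_left (norm_nonneg z) (div_le_one_of_le₀ hmax hmax0)

lemma mul_sub_apply_origin_le {E : Type*} [SeminormedAddGroup E] {f : ℝ → E → ℝ} {l : ℝ}
    (hLip : ∀ y z z', |f y z - f y z'| ≤ l * ‖z - z'‖)
    (hMono : ∀ y y' z, (y - y') * (f y z - f y' z) ≤ 0) (y : ℝ) (z : E) :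
    y * (f y z - f 0 0) ≤ l * |y| * ‖z‖ := by
  have hmono : y * (f y z - f 0 z) ≤ 0 := by simpa using hMono y 0 z
  have hlip : y * (f 0 z - f 0 0) ≤ l * |y| * ‖z‖ :=
    calc y * (f 0 z - f 0 0) ≤ |y| * |f 0 z - f 0 0| := (le_abs_self _).trans (abs_mul _ _).le
      _ ≤ |y| * (l * ‖z‖) := by simpa using mul_le_mul_of_nonneg_left (hLip 0 z 0) (abs_nonneg y)
      _ = l * |y| * ‖z‖ := by ring
  linarith

lemma mul_le_of_mem_Icc_of_le {t a b : ℝ} (ht : t ∈ Icc (0 : ℝ) 1) (hab : a ≤ b) (hb : 0 ≤ b) :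
    t * a ≤ b := by
  rcases le_total a 0 with ha | ha
  · exact (mul_nonpos_of_nonneg_of_nonpos ht.1 ha).trans hb
  · exact (mul_le_of_le_one_left ha ht.2).trans hab

theorem truncated_generator_one_sided_growth_general
    (d : ℕ) (l : ℝ) (hl : 0 ≤ l)
    (f : ℝ → EuclideanSpace ℝ (Fin d) → ℝ)
    (hLip : ∀ y z z', |f y z - f y z'| ≤ l * ‖z - z'‖)
    (hMono : ∀ y y' z, (y - y') * (f y z - f y' z) ≤ 0)
    (θ : ℝ → ℝ) (hθ0 : ∀ y, 0 ≤ θ y) (hθ1 : ∀ y, θ y ≤ 1)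
    (c : ℝ) (hc0 : 0 ≤ c) (hc1 : c ≤ 1)
    (n : ℕ) :
    ∀ (y : ℝ) (z : EuclideanSpace ℝ (Fin d)),
      y * (θ y * (f y (trunc n z) - f 0 0) * c + f 0 0) ≤
        |y| * |f 0 0| + l * |y| * ‖z‖ := by
  intro y z
  have hgrowth : y * (f y (trunc n z) - f 0 0) ≤ l * |y| * ‖z‖ := by
    refine (mul_sub_apply_origin_le hLip hMono y _).trans ?_
    gcongr
    exact norm_trunc_le n z
  have hθc : θ y * c ∈ Icc (0 : ℝ) 1 := ⟨mul_nonneg (hθ0 y) hc0, mul_le_one₀ (hθ1 y) hc0 hc1⟩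
  calc y * (θ y * (f y (trunc n z) - f 0 0) * c + f 0 0)
        = θ y * c * (y * (f y (trunc n z) - f 0 0)) + y * f 0 0 := by ring
    _ ≤ l * |y| * ‖z‖ + |y| * |f 0 0| :=
        add_le_add (mul_le_of_mem_Icc_of_le hθc hgrowth (by positivity))
          ((le_abs_self _).trans (abs_mul _ _).le)
    _ = |y| * |f 0 0| + l * |y| * ‖z‖ := add_comm _ _

/-- one-sided linear growth of the truncated generator
`h(y,z) = θ(y)·(f(y, q_n(z)) − f(0,0))·c + f(0,0)`:
`y·h(y,z) ≤ |y|·|f(0,0)| + λ·|y|·‖z‖`. -/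
theorem truncated_generator_one_sided_growth
    (d : ℕ) (l : ℝ) (hl : 0 ≤ l)
    (f : ℝ → EuclideanSpace ℝ (Fin d) → ℝ)
    (hLip : ∀ y z z', |f y z - f y z'| ≤ l * ‖z - z'‖)
    (hMono : ∀ y y' z, (y - y') * (f y z - f y' z) ≤ 0)
    (θ : ℝ → ℝ) (hθ0 : ∀ y, 0 ≤ θ y) (hθ1 : ∀ y, θ y ≤ 1)
    (c : ℝ) (hc0 : 0 ≤ c) (hc1 : c ≤ 1)
    (n : ℕ) (hn : 1 ≤ n) :
    ∀ (y : ℝ) (z : EuclideanSpace ℝ (Fin d)),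
      y * (θ y * (f y (trunc n z) - f 0 0) * c + f 0 0) ≤
        |y| * |f 0 0| + l * |y| * ‖z‖ :=
  truncated_generator_one_sided_growth_general d l hl f hLip hMono θ hθ0 hθ1 c hc0 hc1 n
end

section
/- (Skorokhod-condition comparison of reflecting terms.) Under the stated assumptions, ∫_{[0,T]} φ(Y_s − Y'_s) dμ(s) − ∫_{[0,T]} φ(Y_s − Y'_s) dν(s) ≤ ∫_{[0,T]} φ(S_s − S'_s) dμ(s) − ∫_{[0,T]} φ(S_s − S'_s) dν(s). -/
open MeasureTheory

lemma integrable_mono_comp_continuous {α : Type*} [MeasurableSpace α]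
    [TopologicalSpace α] [CompactSpace α] [Nonempty α] [OpensMeasurableSpace α]
    (μ : Measure α) [IsFiniteMeasure μ]
    (φ : ℝ → ℝ) (hφ : Monotone φ) (f : α → ℝ) (hf : Continuous f) :
    Integrable (fun s => φ (f s)) μ := by
  obtain ⟨a, -, ha⟩ := isCompact_univ.exists_isMinOn Set.univ_nonempty hf.continuousOn
  obtain ⟨b, -, hb⟩ := isCompact_univ.exists_isMaxOn Set.univ_nonempty hf.continuousOn
  refine Integrable.mono' (integrable_const (max |φ (f a)| |φ (f b)|))
    ((hφ.measurable.comp hf.measurable).aestronglyMeasurable)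
    (Filter.Eventually.of_forall fun s => ?_)
  rw [Real.norm_eq_abs, abs_le]
  constructor
  · exact le_trans (neg_le_neg (le_max_left _ _)) (neg_abs_le _ |>.trans (hφ (ha trivial : f a ≤ f s)))
  · exact le_trans (hφ (hb trivial : f s ≤ f b)) ((le_abs_self _).trans (le_max_right _ _))

/-- Skorokhod-condition comparison of reflecting terms: if
`Y ≥ S`, `Y' ≥ S'`, `∫ (Y − S) dμ = 0`, `∫ (Y' − S') dν = 0` and `φ` is
nondecreasing, then
`∫ φ(Y − Y') dμ − ∫ φ(Y − Y') dν ≤ ∫ φ(S − S') dμ − ∫ φ(S − S') dν`. -/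
theorem skorokhod_comparison
    (T : ℝ) (hT : 0 < T)
    (μ ν : Measure (Set.Icc (0 : ℝ) T))
    [IsFiniteMeasure μ] [IsFiniteMeasure ν]
    (Y Y' S S' : Set.Icc (0 : ℝ) T → ℝ)
    (hY : Continuous Y) (hY' : Continuous Y')
    (hS : Continuous S) (hS' : Continuous S')
    (hYS : ∀ t, S t ≤ Y t) (hYS' : ∀ t, S' t ≤ Y' t)
    (hSkoro : ∫ s, (Y s - S s) ∂μ = 0)
    (hSkoro' : ∫ s, (Y' s - S' s) ∂ν = 0)
    (φ : ℝ → ℝ) (hφ : Monotone φ) :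
    (∫ s, φ (Y s - Y' s) ∂μ) - (∫ s, φ (Y s - Y' s) ∂ν) ≤
      (∫ s, φ (S s - S' s) ∂μ) - (∫ s, φ (S s - S' s) ∂ν) := by
  haveI : Nonempty (Set.Icc (0:ℝ) T) := ⟨⟨0, le_refl 0, hT.le⟩⟩
  -- Y = S μ-a.e.
  have hInt1 : Integrable (fun s => Y s - S s) μ := integrable_mono_comp_continuous μ id monotone_id _ (hY.sub hS)
  have hμae : ∀ᵐ s ∂μ, Y s - S s = 0 := by
    have := (integral_eq_zero_iff_of_nonneg
      (fun s => sub_nonneg.mpr (hYS s)) hInt1).mp hSkoro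
    filter_upwards [this.le] with s hs
    exact le_antisymm hs (sub_nonneg.mpr (hYS s))
  have hInt2 : Integrable (fun s => Y' s - S' s) ν := integrable_mono_comp_continuous ν id monotone_id _ (hY'.sub hS')
  have hνae : ∀ᵐ s ∂ν, Y' s - S' s = 0 := by
    have := (integral_eq_zero_iff_of_nonneg
      (fun s => sub_nonneg.mpr (hYS' s)) hInt2).mp hSkoro'
    filter_upwards [this.le] with s hs
    exact le_antisymm hs (sub_nonneg.mpr (hYS' s))
  have h1 : (∫ s, φ (Y s - Y' s) ∂μ) ≤ ∫ s, φ (S s - S' s) ∂μ := by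
    refine integral_mono_ae
      (integrable_mono_comp_continuous μ φ hφ _ (hY.sub hY'))
      (integrable_mono_comp_continuous μ φ hφ _ (hS.sub hS')) ?_
    filter_upwards [hμae] with s hs
    have hYeq : Y s = S s := by linarith [hs]
    exact hφ (by rw [hYeq]; linarith [hYS' s])
  have h2 : (∫ s, φ (S s - S' s) ∂ν) ≤ ∫ s, φ (Y s - Y' s) ∂ν := by
    refine integral_mono_ae
      (integrable_mono_comp_continuous ν φ hφ _ (hS.sub hS'))
      (integrable_mono_comp_continuous ν φ hφ _ (hY.sub hY')) ?_
    filter_upwards [hνae] with s hs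
    have hYeq : Y' s = S' s := by linarith [hs]
    exact hφ (by rw [hYeq]; linarith [hYS s])
  linarith
end
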